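/- Let X = ℝⁿ with the Euclidean norm, α > 0, and let f: ℝⁿ → (-∞,∞] be proper, lower semicontinuous and bounded below. Consider the Moreau envelope f_α(x) := inf_{w}[f(w) + α‖w−x‖²]. If for a point x̄ the projection P(x̄) := {w : f(w)+α‖w−x̄‖² = f_α(x̄)} is a singleton {w̄}, then the limiting subdifferential of f_α at x̄ equals {2α(x̄−w̄)}. -/

import Mathlib

open Filter Topology Set Bornology

variable {X : Type*} [NormedAddCommGroup X] [NormedSpace ℝ X]

/-- Infimal convolution of an extended-real-valued `f` with a real-valued `φ`. -/
noncomputable def infConv (f : X → EReal) (φ : X → ℝ) (x : X) : EReal :=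
  ⨅ w, f w + ((φ (w - x) : ℝ) : EReal)

/-- ε-Fréchet subdifferential of a real-valued function. -/
def frechetSubdiff (g : X → ℝ) (ε : ℝ) (x0 : X) : Set (X →L[ℝ] ℝ) :=
  {p | ∀ η : ℝ, 0 < η → ∀ᶠ x in 𝓝 x0, p (x - x0) ≤ g x - g x0 + (ε + η) * ‖x - x0‖}

/-- ε-Fréchet subdifferential of an extended-real-valued function. -/
def frechetSubdiffE (f : X → EReal) (ε : ℝ) (x0 : X) : Set (X →L[ℝ] ℝ) :=
  {p | ∀ η : ℝ, 0 < η → ∀ᶠ x in 𝓝 x0,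
    ((p (x - x0) : ℝ) : EReal) ≤ f x - f x0 + (((ε + η) * ‖x - x0‖ : ℝ) : EReal)}

/-- Limiting (Mordukhovich) subdifferential of a real-valued function. -/
def limitingSubdiff (g : X → ℝ) (x0 : X) : Set (X →L[ℝ] ℝ) :=
  {p | ∃ (x : ℕ → X) (ε : ℕ → ℝ) (q : ℕ → X →L[ℝ] ℝ),
    (∀ k, 0 ≤ ε k) ∧ Tendsto ε atTop (𝓝 0) ∧
    Tendsto x atTop (𝓝 x0) ∧ Tendsto (fun k => g (x k)) atTop (𝓝 (g x0)) ∧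
    (∀ k, q k ∈ frechetSubdiff g (ε k) (x k)) ∧
    (∀ v : X, Tendsto (fun k => (q k) v) atTop (𝓝 (p v)))}

/-- Limiting (Mordukhovich) subdifferential of an extended-real-valued function. -/
def limitingSubdiffE (f : X → EReal) (x0 : X) : Set (X →L[ℝ] ℝ) :=
  {p | ∃ (x : ℕ → X) (ε : ℕ → ℝ) (q : ℕ → X →L[ℝ] ℝ),
    (∀ k, 0 ≤ ε k) ∧ Tendsto ε atTop (𝓝 0) ∧
    Tendsto x atTop (𝓝 x0) ∧ Tendsto (fun k => f (x k)) atTop (𝓝 (f x0)) ∧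
    (∀ k, q k ∈ frechetSubdiffE f (ε k) (x k)) ∧
    (∀ v : X, Tendsto (fun k => (q k) v) atTop (𝓝 (p v)))}

/-- Fréchet strict differentiability of an extended-real-valued function. -/
def FrechetStrictDiffAtE (f : X → EReal) (x0 : X) : Prop :=
  ∃ v : X →L[ℝ] ℝ, ∀ ε : ℝ, 0 < ε → ∃ δ > (0 : ℝ), ∀ x y : X,
    ‖x - x0‖ < δ → ‖y - x0‖ < δ →
      f x - f y - ((v (x - y) : ℝ) : EReal) ≤ ((ε * ‖x - y‖ : ℝ) : EReal) ∧
      ((-(ε * ‖x - y‖) : ℝ) : EReal) ≤ f x - f y - ((v (x - y) : ℝ) : EReal)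

/-- Local Lipschitz continuity of an extended-real-valued function around a point. -/
def LocallyLipschitzAtE (f : X → EReal) (x0 : X) : Prop :=
  ∃ ℓ : ℝ, 0 ≤ ℓ ∧ ∃ δ > (0 : ℝ), ∀ x y : X, ‖x - x0‖ < δ → ‖y - x0‖ < δ →
    f x - f y ≤ ((ℓ * ‖x - y‖ : ℝ) : EReal)


/-!
If `w` minimizes `f w + α‖w - x‖²`, then `Fα y ≤ Fα x + 2α⟪x - w, y - x⟫ + α‖y - x‖²` for all `y`:
the envelope has a quadratic majorant at every point, with slope `2α(x - w)`. Such a majorant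
squeezes every Fréchet `ε`-subgradient at `x` to within `ε` of the slope. By compactness and lower
semicontinuity, minimizers at points `y → x0` converge to the unique minimizer `w0`, so the slopes
depend continuously on the point at `x0`. Reading the majorant at nearby `y` back at `x0` then makes
the limit slope `2α(x0 - w0)` a Fréchet subgradient at `x0`, and the squeeze makes it the only
limiting one.
-/

open RealInnerProductSpace

theorem EReal.eq_coe_sub_of_add_coe_eq {a : EReal} {b c : ℝ} (h : a + b = c) :
    a = ((c - b : ℝ) : EReal) := by
  induction a using EReal.rec with
  | bot => simp at h
  | top => simp at h
  | coe a =>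
    norm_cast at h ⊢
    linarith

def HasQuadraticMajorantAt (g : X → ℝ) (ℓ : X →L[ℝ] ℝ) (C : ℝ) (x : X) : Prop :=
  ∀ y, g y ≤ g x + ℓ (y - x) + C * ‖y - x‖ ^ 2

namespace HasQuadraticMajorantAt

variable {g : X → ℝ} {ℓ q : X →L[ℝ] ℝ} {C ε : ℝ} {x : X}

theorem le_add_of_mem_frechetSubdiff (h : HasQuadraticMajorantAt g ℓ C x)
    (hq : q ∈ frechetSubdiff g ε x) (v : X) : q v ≤ ℓ v + ε * ‖v‖ := by
  have hη : ∀ η > 0, q v ≤ ℓ v + (ε + η) * ‖v‖ := by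
    intro η hη
    have hseg : Tendsto (fun t : ℝ => x + t • v) (𝓝[>] 0) (𝓝 x) := by
      have : ContinuousAt (fun t : ℝ => x + t • v) 0 := by fun_prop
      simpa using this.tendsto.mono_left nhdsWithin_le_nhds
    have hev : ∀ᶠ t in 𝓝[>] (0 : ℝ), q v ≤ ℓ v + (ε + η) * ‖v‖ + C * t * ‖v‖ ^ 2 := by
      filter_upwards [hseg.eventually (hq η hη), self_mem_nhdsWithin] with t hqt (ht : 0 < t)
      have hmaj := h (x + t • v)
      simp only [add_sub_cancel_left, map_smul, smul_eq_mul, norm_smul, Real.norm_eq_abs,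
        abs_of_pos ht] at hqt hmaj
      refine le_of_mul_le_mul_left ?_ ht
      linear_combination hqt + hmaj
    have hlim : Tendsto (fun t : ℝ => ℓ v + (ε + η) * ‖v‖ + C * t * ‖v‖ ^ 2) (𝓝[>] 0)
        (𝓝 (ℓ v + (ε + η) * ‖v‖)) := by
      have : ContinuousAt (fun t : ℝ => ℓ v + (ε + η) * ‖v‖ + C * t * ‖v‖ ^ 2) 0 := by fun_prop
      simpa using this.tendsto.mono_left nhdsWithin_le_nhds
    exact ge_of_tendsto hlim hev
  have hlim : Tendsto (fun η : ℝ => ℓ v + (ε + η) * ‖v‖) (𝓝[>] 0) (𝓝 (ℓ v + ε * ‖v‖)) := by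
    have : ContinuousAt (fun η : ℝ => ℓ v + (ε + η) * ‖v‖) 0 := by fun_prop
    simpa using this.tendsto.mono_left nhdsWithin_le_nhds
  exact ge_of_tendsto hlim (eventually_nhdsWithin_of_forall hη)

theorem abs_sub_le_of_mem_frechetSubdiff (h : HasQuadraticMajorantAt g ℓ C x)
    (hq : q ∈ frechetSubdiff g ε x) (v : X) : |q v - ℓ v| ≤ ε * ‖v‖ := by
  have h₁ := h.le_add_of_mem_frechetSubdiff hq v
  have h₂ := h.le_add_of_mem_frechetSubdiff hq (-v)
  rw [map_neg, map_neg, norm_neg] at h₂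
  exact abs_sub_le_iff.2 ⟨by linarith, by linarith⟩

end HasQuadraticMajorantAt

theorem frechetSubdiff_zero_subset_limitingSubdiff (g : X → ℝ) (x0 : X) :
    frechetSubdiff g 0 x0 ⊆ limitingSubdiff g x0 :=
  fun p hp => ⟨fun _ => x0, fun _ => 0, fun _ => p, fun _ => le_rfl, tendsto_const_nhds,
    tendsto_const_nhds, tendsto_const_nhds, fun _ => hp, fun _ => tendsto_const_nhds⟩

section ContinuousMajorant

variable {g : X → ℝ} {ℓ : X → X →L[ℝ] ℝ} {C : ℝ} {x0 : X}

theorem limitingSubdiff_subset_of_forall_hasQuadraticMajorantAt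
    (hℓ : ∀ y, HasQuadraticMajorantAt g (ℓ y) C y) (hcont : ContinuousAt ℓ x0) :
    limitingSubdiff g x0 ⊆ {ℓ x0} := by
  rintro p ⟨x, ε, q, -, hε, hx, -, hq, hqp⟩
  refine ContinuousLinearMap.ext fun v => tendsto_nhds_unique (hqp v) ?_
  have hℓv : Tendsto (fun k => ℓ (x k) v) atTop (𝓝 (ℓ x0 v)) :=
    ((ContinuousLinearMap.apply ℝ ℝ v).continuous.tendsto _).comp (hcont.tendsto.comp hx)
  have hεv : Tendsto (fun k => ε k * ‖v‖) atTop (𝓝 0) := by simpa using hε.mul_const ‖v‖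
  have hgap : Tendsto (fun k => q k v - ℓ (x k) v) atTop (𝓝 0) :=
    squeeze_zero_norm (fun k => (hℓ (x k)).abs_sub_le_of_mem_frechetSubdiff (hq k) v) hεv
  simpa using hℓv.add hgap

theorem mem_frechetSubdiff_zero_of_forall_hasQuadraticMajorantAt
    (hℓ : ∀ y, HasQuadraticMajorantAt g (ℓ y) C y) (hcont : ContinuousAt ℓ x0) :
    ℓ x0 ∈ frechetSubdiff g 0 x0 := by
  intro η hη
  have hsmall : Tendsto (fun y => ‖ℓ x0 - ℓ y‖ + C * ‖x0 - y‖) (𝓝 x0) (𝓝 0) := by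
    have := ((tendsto_const_nhds (x := ℓ x0)).sub hcont.tendsto).norm.add
      (((tendsto_const_nhds (x := x0)).sub tendsto_id).norm.const_mul C)
    simpa using this
  filter_upwards [hsmall.eventually (gt_mem_nhds hη)] with y hy
  -- `ℓ y` majorizes `g` at `y`; read this at `x0` and correct by `ℓ x0 - ℓ y`.
  have hmaj := hℓ y x0
  have hop : (ℓ x0 - ℓ y) (y - x0) ≤ ‖ℓ x0 - ℓ y‖ * ‖y - x0‖ :=
    (le_abs_self _).trans ((ℓ x0 - ℓ y).le_opNorm _)
  have hyx : ‖x0 - y‖ = ‖y - x0‖ := norm_sub_rev _ _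
  rw [hyx, show x0 - y = -(y - x0) by abel, map_neg] at hmaj
  rw [hyx] at hy
  rw [sub_apply] at hop
  nlinarith [mul_le_mul_of_nonneg_right hy.le (norm_nonneg (y - x0))]

theorem limitingSubdiff_eq_singleton_of_forall_hasQuadraticMajorantAt
    (hℓ : ∀ y, HasQuadraticMajorantAt g (ℓ y) C y) (hcont : ContinuousAt ℓ x0) :
    limitingSubdiff g x0 = {ℓ x0} :=
  (limitingSubdiff_subset_of_forall_hasQuadraticMajorantAt hℓ hcont).antisymm <|
    singleton_subset_iff.2 <| frechetSubdiff_zero_subset_limitingSubdiff g x0 <|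
      mem_frechetSubdiff_zero_of_forall_hasQuadraticMajorantAt hℓ hcont

end ContinuousMajorant

section MoreauEnvelope

variable {E : Type*} [NormedAddCommGroup E] {f : E → EReal} {α c : ℝ} {Fα : E → ℝ}

theorem exists_subseq_tendsto_of_objective_le [ProperSpace E] (hα : 0 < α)
    (hc : ∀ w, (c : EReal) ≤ f w) (hf : LowerSemicontinuous f) {xlim : E} {m : ℝ}
    {x w : ℕ → E} {s : ℕ → ℝ} (hx : Tendsto x atTop (𝓝 xlim)) (hs : Tendsto s atTop (𝓝 m))
    (hws : ∀ k, f (w k) + ((α * ‖w k - x k‖ ^ 2 : ℝ) : EReal) ≤ s k) :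
    ∃ (wlim : E) (φ : ℕ → ℕ), StrictMono φ ∧ Tendsto (w ∘ φ) atTop (𝓝 wlim) ∧
      f wlim + ((α * ‖wlim - xlim‖ ^ 2 : ℝ) : EReal) ≤ m := by
  obtain ⟨M, hM⟩ := hs.bddAbove_range
  have hbdd : ∀ k, w k - x k ∈ Metric.closedBall (0 : E) √((M - c) / α) := by
    intro k
    have hk : ((c + α * ‖w k - x k‖ ^ 2 : ℝ) : EReal) ≤ s k := by
      rw [EReal.coe_add]
      exact (add_le_add_left (hc _) _).trans (hws k)
    have hkM := (EReal.coe_le_coe_iff.1 hk).trans (hM ⟨k, rfl⟩)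
    have hsq : 0 ≤ α * ‖w k - x k‖ ^ 2 := by positivity
    rw [mem_closedBall_zero_iff, Real.le_sqrt (norm_nonneg _) (div_nonneg (by linarith) hα.le),
      le_div_iff₀ hα]
    linarith
  obtain ⟨d, -, φ, hφ, hd⟩ := (isCompact_closedBall _ _).tendsto_subseq hbdd
  have hxφ := hx.comp hφ.tendsto_atTop
  have hwφ : Tendsto (w ∘ φ) atTop (𝓝 (xlim + d)) :=
    (hxφ.add hd).congr fun k => add_sub_cancel (x (φ k)) (w (φ k))
  refine ⟨xlim + d, φ, hφ, hwφ, ?_⟩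
  have hobj : LowerSemicontinuous fun p : E × E => f p.2 + ((α * ‖p.2 - p.1‖ ^ 2 : ℝ) : EReal) :=
    (hf.comp continuous_snd).add' (EReal.continuous_coe_iff.2 (by fun_prop)).lowerSemicontinuous
      fun p => EReal.continuousAt_add (Or.inr (EReal.coe_ne_bot _)) (Or.inr (EReal.coe_ne_top _))
  by_contra! hlt
  obtain ⟨y, hmy, hy⟩ := exists_between hlt
  have hlow := (hxφ.prodMk_nhds hwφ).eventually (hobj _ y hy)
  have hup := (EReal.continuous_coe_iff.2 continuous_id |>.tendsto m |>.comp
    (hs.comp hφ.tendsto_atTop)).eventually (gt_mem_nhds hmy)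
  obtain ⟨k, hk₁, hk₂⟩ := (hlow.and hup).exists
  exact (hk₁.trans_le (hws (φ k))).not_gt hk₂

theorem moreau_le_objective [NormedSpace ℝ E]
    (hF : ∀ x, (Fα x : EReal) = infConv f (fun u => α * ‖u‖ ^ 2) x) (x w : E) :
    (Fα x : EReal) ≤ f w + ((α * ‖w - x‖ ^ 2 : ℝ) : EReal) :=
  (hF x).trans_le (iInf_le _ w)

theorem exists_moreau_minimizer [NormedSpace ℝ E] [ProperSpace E] (hα : 0 < α)
    (hc : ∀ w, (c : EReal) ≤ f w) (hf : LowerSemicontinuous f)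
    (hF : ∀ x, (Fα x : EReal) = infConv f (fun u => α * ‖u‖ ^ 2) x) (x : E) :
    ∃ w, f w + ((α * ‖w - x‖ ^ 2 : ℝ) : EReal) = Fα x := by
  have happrox : ∀ k : ℕ, ∃ w, f w + ((α * ‖w - x‖ ^ 2 : ℝ) : EReal) <
      ((Fα x + 1 / (k + 1) : ℝ) : EReal) := fun k => by
    have hlt : infConv f (fun u => α * ‖u‖ ^ 2) x < ((Fα x + 1 / (k + 1) : ℝ) : EReal) := by
      rw [← hF x, EReal.coe_lt_coe_iff]
      exact lt_add_of_pos_right _ Nat.one_div_pos_of_nat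
    exact iInf_lt_iff.1 hlt
  choose w hw using happrox
  have hs : Tendsto (fun k : ℕ => Fα x + 1 / (k + 1 : ℝ)) atTop (𝓝 (Fα x)) := by
    simpa using tendsto_one_div_add_atTop_nhds_zero_nat.const_add (Fα x)
  obtain ⟨wlim, -, -, -, hwlim⟩ :=
    exists_subseq_tendsto_of_objective_le hα hc hf tendsto_const_nhds hs fun k => (hw k).le
  exact ⟨wlim, hwlim.antisymm (moreau_le_objective hF x wlim)⟩

theorem tendsto_moreau_minimizer [NormedSpace ℝ E] [ProperSpace E] (hα : 0 < α)
    (hc : ∀ w, (c : EReal) ≤ f w) (hf : LowerSemicontinuous f)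
    (hF : ∀ x, (Fα x : EReal) = infConv f (fun u => α * ‖u‖ ^ 2) x) {x0 w0 : E}
    (hproj : {w | f w + ((α * ‖w - x0‖ ^ 2 : ℝ) : EReal) = ((Fα x0 : ℝ) : EReal)} = {w0})
    {w : E → E} (hw : ∀ y, f (w y) + ((α * ‖w y - y‖ ^ 2 : ℝ) : EReal) = Fα y) :
    Tendsto w (𝓝 x0) (𝓝 w0) := by
  have hw0 : f w0 = ((Fα x0 - α * ‖w0 - x0‖ ^ 2 : ℝ) : EReal) :=
    EReal.eq_coe_sub_of_add_coe_eq (hproj.symm.subset rfl)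
  rw [tendsto_nhds_iff_seq_tendsto]
  intro x hx
  refine tendsto_of_subseq_tendsto fun ns hns => ?_
  -- `Fα` is not yet known to be continuous, so bound it by the objective at `w0`.
  have hs : Tendsto (fun k => Fα x0 - α * ‖w0 - x0‖ ^ 2 + α * ‖w0 - x (ns k)‖ ^ 2) atTop
      (𝓝 (Fα x0)) := by
    have := ((((hx.comp hns).const_sub w0).norm.pow 2).const_mul α).const_add
      (Fα x0 - α * ‖w0 - x0‖ ^ 2)
    rwa [sub_add_cancel] at this
  obtain ⟨wlim, φ, -, hφ, hwlim⟩ :=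
      exists_subseq_tendsto_of_objective_le hα hc hf (hx.comp hns) hs fun k => by
      rw [hw, EReal.coe_add, ← hw0]
      exact moreau_le_objective hF _ w0
  have hwlim_eq : wlim = w0 := hproj.subset (hwlim.antisymm (moreau_le_objective hF x0 wlim))
  exact ⟨φ, hwlim_eq ▸ hφ⟩

theorem moreau_hasQuadraticMajorantAt [InnerProductSpace ℝ E]
    (hF : ∀ x, (Fα x : EReal) = infConv f (fun u => α * ‖u‖ ^ 2) x) {x w : E}
    (hw : f w + ((α * ‖w - x‖ ^ 2 : ℝ) : EReal) = Fα x) :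
    HasQuadraticMajorantAt Fα ((2 * α) • innerSL ℝ (x - w)) α x := by
  intro y
  have hle : Fα y ≤ Fα x - α * ‖w - x‖ ^ 2 + α * ‖w - y‖ ^ 2 := by
    have := moreau_le_objective hF y w
    rwa [EReal.eq_coe_sub_of_add_coe_eq hw, ← EReal.coe_add, EReal.coe_le_coe_iff] at this
  have hexpand : ‖w - y‖ ^ 2 = ‖w - x‖ ^ 2 + 2 * ⟪x - w, y - x⟫ + ‖y - x‖ ^ 2 := by
    rw [show w - y = (w - x) - (y - x) by abel, norm_sub_sq_real,
      show x - w = -(w - x) by abel, inner_neg_left]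
    ring
  rw [smul_apply, innerSL_apply_apply, smul_eq_mul]
  linear_combination hle + α * hexpand

end MoreauEnvelope

theorem stmt_19_general (n : ℕ) (α : ℝ) (hα : 0 < α)
    (f : EuclideanSpace ℝ (Fin n) → EReal)
    (hflsc : LowerSemicontinuous f)
    (hbdd : ∃ c : ℝ, ∀ x, ((c : ℝ) : EReal) ≤ f x)
    (Fα : EuclideanSpace ℝ (Fin n) → ℝ)
    (hFα : ∀ x, ((Fα x : ℝ) : EReal) = ⨅ w, f w + ((α * ‖w - x‖ ^ 2 : ℝ) : EReal))
    (x0 w0 : EuclideanSpace ℝ (Fin n))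
    (hproj : {w : EuclideanSpace ℝ (Fin n) |
        f w + ((α * ‖w - x0‖ ^ 2 : ℝ) : EReal) = ((Fα x0 : ℝ) : EReal)} = {w0}) :
    limitingSubdiff Fα x0 =
      {(2 * α) • (InnerProductSpace.toDual ℝ (EuclideanSpace ℝ (Fin n)) (x0 - w0) :
        EuclideanSpace ℝ (Fin n) →L[ℝ] ℝ)} := by
  obtain ⟨c, hc⟩ := hbdd
  choose w hw using exists_moreau_minimizer hα hc hflsc hFα
  have hw0 : w x0 = w0 := hproj.subset (hw x0)
  have hwc : ContinuousAt w x0 := by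
    rw [ContinuousAt, hw0]
    exact tendsto_moreau_minimizer hα hc hflsc hFα hproj hw
  have hℓ : ContinuousAt (fun y => (2 * α) • innerSL ℝ (y - w y)) x0 := by fun_prop
  rw [limitingSubdiff_eq_singleton_of_forall_hasQuadraticMajorantAt
    (fun y => moreau_hasQuadraticMajorantAt hFα (hw y)) hℓ, hw0]
  rfl

/-- limiting subdifferential of the Moreau envelope at a point with a unique
projection. -/
theorem stmt_19 (n : ℕ) (α : ℝ) (hα : 0 < α)
    (f : EuclideanSpace ℝ (Fin n) → EReal)
    (hfbot : ∀ x, f x ≠ ⊥) (hfprop : ∃ x, f x ≠ ⊤)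
    (hflsc : LowerSemicontinuous f)
    (hbdd : ∃ c : ℝ, ∀ x, ((c : ℝ) : EReal) ≤ f x)
    (Fα : EuclideanSpace ℝ (Fin n) → ℝ)
    (hFα : ∀ x, ((Fα x : ℝ) : EReal) = ⨅ w, f w + ((α * ‖w - x‖ ^ 2 : ℝ) : EReal))
    (x0 w0 : EuclideanSpace ℝ (Fin n))
    (hproj : {w : EuclideanSpace ℝ (Fin n) |
        f w + ((α * ‖w - x0‖ ^ 2 : ℝ) : EReal) = ((Fα x0 : ℝ) : EReal)} = {w0}) :
    limitingSubdiff Fα x0 =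
      {(2 * α) • (InnerProductSpace.toDual ℝ (EuclideanSpace ℝ (Fin n)) (x0 - w0) :
        EuclideanSpace ℝ (Fin n) →L[ℝ] ℝ)} :=
  stmt_19_general n α hα f hflsc hbdd Fα hFα x0 w0 hproj
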